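/- arXiv:1001.0722 — 3 statements merged into one kernel-verified Lean document; each statement's English description precedes it below -/
import Mathlib

section
/- Let G be a finite group, let E and E' be finite-dimensional complex vector spaces carrying the trivial G-action, and let R and R' be irreducible finite-dimensional complex representations of G. Then every G-equivariant linear map L : E ⊗ R → E' ⊗ R' (where G acts as id ⊗ ρ_R on E ⊗ R and as id ⊗ ρ_{R'} on E' ⊗ R') is a pure tensor: there exist a linear map φ : E → E' and a G-equivariant linear map ψ : R → R' such that L = φ ⊗ ψ. -/
/-!
Since `G` acts trivially on `E'`, contracting the first factor of `L (e ⊗ ·)` against a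
functional `f` on `E'` gives an equivariant map `R → R'`. By Schur's lemma all of these are multiples of a single `ψ₀`, and a
linear map all of whose slices are multiples of `ψ₀` is `φ ⊗ ψ₀`: pick `r₀` and a functional
`g` on `R'` with `g (ψ₀ r₀) = 1`, and let `φ e` be `L (e ⊗ r₀)` with its second factor
contracted against `g`.
-/

open TensorProduct

/-- A representation is irreducible if the space is nonzero and has no
invariant subspace other than `⊥` and `⊤`. -/
def Representation.IsIrreducible' {k G W : Type} [CommSemiring k] [Monoid G]
    [AddCommMonoid W] [Module k W] (ρ : Representation k G W) : Prop :=
  Nontrivial W ∧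
    ∀ p : Submodule k W, (∀ (g : G) (x : W), x ∈ p → ρ g x ∈ p) → p = ⊥ ∨ p = ⊤

namespace Representation

theorem IsIrreducible'.isIrreducible {k G V : Type} [Field k] [Monoid G] [AddCommGroup V]
    [Module k V] {ρ : Representation k G V} (h : ρ.IsIrreducible') : ρ.IsIrreducible :=
  have := h.1
  { exists_pair_ne := ⟨⊥, ⊤, fun hbt => bot_ne_top (congrArg Subrepresentation.toSubmodule hbt)⟩
    eq_bot_or_eq_top := fun W =>
      (h.2 W.toSubmodule fun g _ hx => W.apply_mem_toSubmodule g hx).imp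
        Subrepresentation.ext Subrepresentation.ext }

namespace IntertwiningMap

variable {k G V W : Type*} [Field k] [IsAlgClosed k] [Monoid G] [AddCommGroup V] [Module k V]
  [FiniteDimensional k V] [AddCommGroup W] [Module k W]
  {ρ : Representation k G V} {σ : Representation k G W} [ρ.IsIrreducible] [σ.IsIrreducible]

theorem eq_smul_of_ne_zero {ψ₀ : IntertwiningMap ρ σ} (hψ₀ : ψ₀ ≠ 0) (ψ : IntertwiningMap ρ σ) :
    ∃ c : k, ψ = c • ψ₀ := by
  let e := ψ₀.ofBijective ((IsIrreducible.bijective_or_eq_zero ψ₀).resolve_right hψ₀)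
  obtain ⟨c, hc⟩ := IsIrreducible.algebraMap_intertwiningMap_bijective_of_isAlgClosed.2
    (e.symm.toIntertwiningMap.comp ψ)
  refine ⟨c, ext (LinearMap.ext fun v => ?_)⟩
  simpa [e] using (congrArg (fun f : IntertwiningMap ρ ρ => e (f v)) hc).symm

theorem exists_forall_eq_smul : ∃ ψ₀ : IntertwiningMap ρ σ, ∀ ψ, ∃ c : k, ψ = c • ψ₀ := by
  rcases subsingleton_or_nontrivial (IntertwiningMap ρ σ) with _ | _
  · exact ⟨0, fun _ => ⟨0, Subsingleton.elim _ _⟩⟩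
  · obtain ⟨ψ₀, hψ₀⟩ := exists_ne (0 : IntertwiningMap ρ σ)
    exact ⟨ψ₀, eq_smul_of_ne_zero hψ₀⟩

end IntertwiningMap

end Representation

section Contraction

variable {k M N M' N' : Type*} [CommRing k] [AddCommGroup M] [Module k M] [AddCommGroup N]
  [Module k N] [AddCommGroup M'] [Module k M'] [AddCommGroup N'] [Module k N']

namespace TensorProduct

theorem ext_of_forall_lid_rTensor [Module.Free k M] {z₁ z₂ : M ⊗[k] N}
    (h : ∀ f : Module.Dual k M,
      TensorProduct.lid k N (f.rTensor N z₁) = TensorProduct.lid k N (f.rTensor N z₂)) :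
    z₁ = z₂ := by
  classical
  let b := Module.Free.chooseBasis k M
  apply (equivFinsuppOfBasisLeft b).injective
  ext i
  simp only [equivFinsuppOfBasisLeft_apply, h]

theorem lid_rTensor_lTensor (f : Module.Dual k M) (T : N →ₗ[k] N') (z : M ⊗[k] N) :
    TensorProduct.lid k N' (f.rTensor N' (T.lTensor M z)) =
      T (TensorProduct.lid k N (f.rTensor N z)) := by
  induction z using TensorProduct.induction_on with
  | zero => simp
  | tmul m n => simp
  | add z₁ z₂ h₁ h₂ => simp only [map_add, h₁, h₂]

theorem apply_rid_lTensor (f : Module.Dual k M) (g : Module.Dual k N) (z : M ⊗[k] N) :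
    f (TensorProduct.rid k M (g.lTensor M z)) = g (TensorProduct.lid k N (f.rTensor N z)) := by
  induction z using TensorProduct.induction_on with
  | zero => simp
  | tmul m n => simp [mul_comm]
  | add z₁ z₂ h₁ h₂ => simp only [map_add, h₁, h₂]

end TensorProduct

namespace LinearMap

def tensorSlice (L : M ⊗[k] N →ₗ[k] M' ⊗[k] N') (f : Module.Dual k M') (m : M) :
    N →ₗ[k] N' :=
  TensorProduct.lid k N' ∘ₗ f.rTensor N' ∘ₗ L ∘ₗ TensorProduct.mk k M N m

@[simp]
theorem tensorSlice_apply (L : M ⊗[k] N →ₗ[k] M' ⊗[k] N') (f : Module.Dual k M') (m : M)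
    (n : N) : L.tensorSlice f m n = TensorProduct.lid k N' (f.rTensor N' (L (m ⊗ₜ n))) :=
  rfl

theorem tensorSlice_comp {L : M ⊗[k] N →ₗ[k] M' ⊗[k] N'} {S : N →ₗ[k] N} {T : N' →ₗ[k] N'}
    (hL : L ∘ₗ S.lTensor M = T.lTensor M' ∘ₗ L) (f : Module.Dual k M') (m : M) :
    L.tensorSlice f m ∘ₗ S = T ∘ₗ L.tensorSlice f m := by
  ext n
  simpa [lid_rTensor_lTensor] using
    congrArg (fun z => TensorProduct.lid k N' (f.rTensor N' z)) (LinearMap.congr_fun hL (m ⊗ₜ n))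

end LinearMap

end Contraction

theorem LinearMap.exists_eq_map_of_tensorSlice_eq_smul {K M N M' N' : Type*} [Field K]
    [AddCommGroup M] [Module K M] [AddCommGroup N] [Module K N] [AddCommGroup M'] [Module K M']
    [AddCommGroup N'] [Module K N'] (L : M ⊗[K] N →ₗ[K] M' ⊗[K] N') (ψ : N →ₗ[K] N')
    (h : ∀ f m, ∃ c : K, L.tensorSlice f m = c • ψ) : ∃ φ : M →ₗ[K] M', L = map φ ψ := by
  rcases eq_or_ne ψ 0 with rfl | hψ
  · refine ⟨0, ext' fun m n => ext_of_forall_lid_rTensor fun f => ?_⟩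
    obtain ⟨c, hc⟩ := h f m
    simpa using LinearMap.congr_fun hc n
  obtain ⟨n₀, hn₀⟩ := DFunLike.ne_iff.mp hψ
  obtain ⟨g, hg⟩ := Module.Projective.exists_dual_eq_one K hn₀
  let φ : M →ₗ[K] M' :=
    TensorProduct.rid K M' ∘ₗ g.lTensor M' ∘ₗ L ∘ₗ (TensorProduct.mk K M N).flip n₀
  refine ⟨φ, ext' fun m n => ext_of_forall_lid_rTensor fun f => ?_⟩
  obtain ⟨c, hc⟩ := h f m
  have hφ : f (φ m) = c := by
    simpa [φ, apply_rid_lTensor, hg] using congrArg g (LinearMap.congr_fun hc n₀)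
  simpa [hφ] using LinearMap.congr_fun hc n

theorem equivariant_map_is_pure_tensor_general
    {G : Type} [Group G]
    {E E' R R' : Type}
    [AddCommGroup E] [Module ℂ E]
    [AddCommGroup E'] [Module ℂ E']
    [AddCommGroup R] [Module ℂ R] [FiniteDimensional ℂ R]
    [AddCommGroup R'] [Module ℂ R']
    (ρR : Representation ℂ G R) (ρR' : Representation ℂ G R')
    (hirrR : ρR.IsIrreducible') (hirrR' : ρR'.IsIrreducible')
    (L : E ⊗[ℂ] R →ₗ[ℂ] E' ⊗[ℂ] R')
    (hL : ∀ g : G,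
      L ∘ₗ TensorProduct.map (LinearMap.id : E →ₗ[ℂ] E) (ρR g)
        = TensorProduct.map (LinearMap.id : E' →ₗ[ℂ] E') (ρR' g) ∘ₗ L) :
    ∃ (φ : E →ₗ[ℂ] E') (ψ : R →ₗ[ℂ] R'),
      (∀ g : G, ψ ∘ₗ ρR g = ρR' g ∘ₗ ψ) ∧ L = TensorProduct.map φ ψ := by
  have := hirrR.isIrreducible
  have := hirrR'.isIrreducible
  obtain ⟨ψ₀, hψ₀⟩ := Representation.IntertwiningMap.exists_forall_eq_smul (ρ := ρR) (σ := ρR')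
  obtain ⟨φ, hφ⟩ := L.exists_eq_map_of_tensorSlice_eq_smul ψ₀.toLinearMap fun f e => by
    obtain ⟨c, hc⟩ := hψ₀ ⟨L.tensorSlice f e, fun g => L.tensorSlice_comp (hL g) f e⟩
    exact ⟨c, congrArg Representation.IntertwiningMap.toLinearMap hc⟩
  exact ⟨φ, ψ₀.toLinearMap, ψ₀.isIntertwining', hφ⟩

/-- If `R`, `R'` are irreducible representations of a finite
group `G` and `E`, `E'` carry the trivial `G`-action, then every
`G`-equivariant linear map `L : E ⊗ R → E' ⊗ R'` is a pure tensor
`L = φ ⊗ ψ` with `φ : E → E'` linear and `ψ : R → R'` equivariant. -/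
theorem equivariant_map_is_pure_tensor
    {G : Type} [Group G] [Fintype G]
    {E E' R R' : Type}
    [AddCommGroup E] [Module ℂ E] [FiniteDimensional ℂ E]
    [AddCommGroup E'] [Module ℂ E'] [FiniteDimensional ℂ E']
    [AddCommGroup R] [Module ℂ R] [FiniteDimensional ℂ R]
    [AddCommGroup R'] [Module ℂ R'] [FiniteDimensional ℂ R']
    (ρR : Representation ℂ G R) (ρR' : Representation ℂ G R')
    (hirrR : ρR.IsIrreducible') (hirrR' : ρR'.IsIrreducible')
    (L : E ⊗[ℂ] R →ₗ[ℂ] E' ⊗[ℂ] R')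
    (hL : ∀ g : G,
      L ∘ₗ TensorProduct.map (LinearMap.id : E →ₗ[ℂ] E) (ρR g)
        = TensorProduct.map (LinearMap.id : E' →ₗ[ℂ] E') (ρR' g) ∘ₗ L) :
    ∃ (φ : E →ₗ[ℂ] E') (ψ : R →ₗ[ℂ] R'),
      (∀ g : G, ψ ∘ₗ ρR g = ρR' g ∘ₗ ψ) ∧ L = TensorProduct.map φ ψ :=
  equivariant_map_is_pure_tensor_general ρR ρR' hirrR hirrR' L hL
end

section
/- Let V be a finite-dimensional complex inner product space and T : V → V an anti-unitary operator with T² = -id_V. Then the complex dimension of V is even, say dim V = 2m, and there exist vectors e_1, …, e_m in V such that (e_1, …, e_m, T e_1, …, T e_m) is an orthonormal basis of V. -/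
/-!
Since `T` is anti-unitary with `T² = -1`, the form `(x, y) ↦ ⟪x, T y⟫` is antisymmetric, so every
`x` is orthogonal to `T x`. Hence if `e₁, …, e_k, T e₁, …, T e_k` is orthonormal, any unit vector
`v` orthogonal to all of them can be added as `e_{k+1}`: `T v` is then automatically orthogonal to
`v` and to the others. Repeating this until the family spans `V` gives the basis, and its size
`2m` is the dimension.
-/

open scoped InnerProductSpace ComplexConjugate

open Module Submodule

theorem exists_norm_eq_one_forall_inner_eq_zero {𝕜 E : Type*} [RCLike 𝕜]
    [NormedAddCommGroup E] [InnerProductSpace 𝕜 E] [FiniteDimensional 𝕜 E] {s : Set E}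
    (hs : span 𝕜 s ≠ ⊤) : ∃ v : E, ‖v‖ = 1 ∧ ∀ x ∈ s, ⟪x, v⟫_𝕜 = 0 := by
  obtain ⟨w, hw, hw0⟩ := (span 𝕜 s)ᗮ.ne_bot_iff.mp (by rwa [Ne, orthogonal_eq_bot_iff])
  refine ⟨(‖w‖⁻¹ : 𝕜) • w, norm_smul_inv_norm hw0, fun x hx => ?_⟩
  rw [inner_smul_right, inner_right_of_mem_orthogonal (subset_span hx) hw, mul_zero]

variable {V : Type*} [NormedAddCommGroup V] [InnerProductSpace ℂ V]

namespace LinearMap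

variable {T : V →ₗ⋆[ℂ] V}

theorem inner_apply_antisymm (hT : ∀ v w : V, ⟪T v, T w⟫_ℂ = conj ⟪v, w⟫_ℂ)
    (hT2 : ∀ v : V, T (T v) = -v) (x y : V) : ⟪x, T y⟫_ℂ = -⟪y, T x⟫_ℂ := by
  calc ⟪x, T y⟫_ℂ = -⟪T (T x), T y⟫_ℂ := by rw [hT2, inner_neg_left, neg_neg]
    _ = -⟪y, T x⟫_ℂ := by rw [hT, inner_conj_symm]

theorem inner_self_apply_eq_zero (hT : ∀ v w : V, ⟪T v, T w⟫_ℂ = conj ⟪v, w⟫_ℂ)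
    (hT2 : ∀ v : V, T (T v) = -v) (x : V) : ⟪x, T x⟫_ℂ = 0 :=
  self_eq_neg.mp (inner_apply_antisymm hT hT2 x x)

theorem orthonormal_sumElim_comp_iff (hT : ∀ v w : V, ⟪T v, T w⟫_ℂ = conj ⟪v, w⟫_ℂ)
    {ι : Type*} {e : ι → V} :
    Orthonormal ℂ (Sum.elim e (T ∘ e)) ↔ Orthonormal ℂ e ∧ ∀ i j, ⟪e i, T (e j)⟫_ℂ = 0 := by
  classical
  simp only [orthonormal_iff_ite]
  constructor
  · intro h
    exact ⟨fun i j => by simpa using h (.inl i) (.inl j),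
      fun i j => by simpa using h (.inl i) (.inr j)⟩
  · rintro ⟨he, heT⟩ (i | i) (j | j)
    · simpa using he i j
    · simpa using heT i j
    · simp [← inner_conj_symm (T (e i)) (e j), heT]
    · simp [hT, he, apply_ite conj]

variable [FiniteDimensional ℂ V]

theorem exists_orthonormal_sumElim_vecCons (hT : ∀ v w : V, ⟪T v, T w⟫_ℂ = conj ⟪v, w⟫_ℂ)
    (hT2 : ∀ v : V, T (T v) = -v) {m : ℕ} {e : Fin m → V}
    (he : Orthonormal ℂ (Sum.elim e (T ∘ e)))
    (hspan : span ℂ (Set.range (Sum.elim e (T ∘ e))) ≠ ⊤) :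
    ∃ v : V, Orthonormal ℂ (Sum.elim (Matrix.vecCons v e) (T ∘ Matrix.vecCons v e)) := by
  obtain ⟨v, hv1, hv⟩ := exists_norm_eq_one_forall_inner_eq_zero hspan
  have hev (i : Fin m) : ⟪e i, v⟫_ℂ = 0 := hv _ ⟨.inl i, rfl⟩
  have hTev (i : Fin m) : ⟪T (e i), v⟫_ℂ = 0 := hv _ ⟨.inr i, rfl⟩
  have hve (i : Fin m) : ⟪v, e i⟫_ℂ = 0 := by rw [← inner_conj_symm, hev, map_zero]
  have hvTe (i : Fin m) : ⟪v, T (e i)⟫_ℂ = 0 := by rw [← inner_conj_symm, hTev, map_zero]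
  have heTv (i : Fin m) : ⟪e i, T v⟫_ℂ = 0 := by
    rw [inner_apply_antisymm hT hT2, hvTe, neg_zero]
  rw [orthonormal_sumElim_comp_iff hT] at he
  refine ⟨v, (orthonormal_sumElim_comp_iff hT).mpr ⟨orthonormal_vecCons_iff.mpr ⟨hv1, hve, he.1⟩,
    Fin.cases (Fin.cases (inner_self_apply_eq_zero hT hT2 v) hvTe)
      fun i => Fin.cases (heTv i) (he.2 i)⟩⟩

theorem exists_orthonormal_sumElim_span_eq_top
    (hT : ∀ v w : V, ⟪T v, T w⟫_ℂ = conj ⟪v, w⟫_ℂ) (hT2 : ∀ v : V, T (T v) = -v)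
    {m : ℕ} (e : Fin m → V) (he : Orthonormal ℂ (Sum.elim e (T ∘ e))) :
    ∃ (n : ℕ) (e' : Fin n → V), Orthonormal ℂ (Sum.elim e' (T ∘ e')) ∧
      span ℂ (Set.range (Sum.elim e' (T ∘ e'))) = ⊤ := by
  by_cases hspan : span ℂ (Set.range (Sum.elim e (T ∘ e))) = ⊤
  · exact ⟨m, e, he, hspan⟩
  obtain ⟨v, hv⟩ := exists_orthonormal_sumElim_vecCons hT hT2 he hspan
  exact exists_orthonormal_sumElim_span_eq_top hT hT2 _ hv
termination_by finrank ℂ V - 2 * m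
decreasing_by
  have := hv.linearIndependent.fintype_card_le_finrank
  simp only [Fintype.card_sum, Fintype.card_fin] at this
  omega

end LinearMap

theorem antiunitary_sq_neg_one_exists_quaternionic_onbasis_general
    {V : Type} [NormedAddCommGroup V] [InnerProductSpace ℂ V]
    [FiniteDimensional ℂ V]
    (T : V →ₗ⋆[ℂ] V)
    (hTanti : ∀ v w : V, ⟪T v, T w⟫_ℂ = conj ⟪v, w⟫_ℂ)
    (hT2 : ∀ v : V, T (T v) = -v) :
    ∃ m : ℕ, Module.finrank ℂ V = 2 * m ∧
      ∃ b : OrthonormalBasis (Fin m ⊕ Fin m) ℂ V,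
        ∀ i : Fin m, b (Sum.inr i) = T (b (Sum.inl i)) := by
  obtain ⟨m, e, he, hspan⟩ :=
    LinearMap.exists_orthonormal_sumElim_span_eq_top hTanti hT2 Fin.elim0 (.of_isEmpty _)
  let b := OrthonormalBasis.mk he hspan.ge
  refine ⟨m, ?_, b, fun i => by simp [b]⟩
  rw [finrank_eq_card_basis b.toBasis, Fintype.card_sum, Fintype.card_fin, two_mul]

/-- For an anti-unitary operator `T` with `T² = -id` on a
finite-dimensional complex inner product space `V`, the dimension of `V` is
even, `dim V = 2m`, and there are vectors `e₁, …, e_m` such that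
`(e₁, …, e_m, T e₁, …, T e_m)` is an orthonormal basis of `V`. -/
theorem antiunitary_sq_neg_one_exists_quaternionic_onbasis
    {V : Type} [NormedAddCommGroup V] [InnerProductSpace ℂ V]
    [FiniteDimensional ℂ V]
    (T : V →ₗ⋆[ℂ] V) (hTbij : Function.Bijective T)
    (hTanti : ∀ v w : V, ⟪T v, T w⟫_ℂ = conj ⟪v, w⟫_ℂ)
    (hT2 : ∀ v : V, T (T v) = -v) :
    ∃ m : ℕ, Module.finrank ℂ V = 2 * m ∧
      ∃ b : OrthonormalBasis (Fin m ⊕ Fin m) ℂ V,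
        ∀ i : Fin m, b (Sum.inr i) = T (b (Sum.inl i)) :=
  antiunitary_sq_neg_one_exists_quaternionic_onbasis_general T hTanti hT2
end

section
/- Let N be a positive integer, let J be the 2N × 2N real matrix given in block form by J = [[0, 1_N], [-1_N, 0]], and let x be a unitary 2N × 2N complex matrix which is skew-symmetric, i.e. xᵀ = -x. Then there exists a unitary 2N × 2N complex matrix u such that x = u · J · uᵀ. (Consequently the Cartan embedding of U_{2N} / USp_{2N} is onto the set of skew-symmetric unitary matrices, up to the fixed skew unitary J.) -/
/-!
For a skew-symmetric unitary `x`, the conjugate-linear map `φ v = x v̄` preserves inner products up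
to conjugation and satisfies `φ ∘ φ = -1`, because `x x̄ = -x xᴴ = -1`; that is, `φ` is a
quaternionic structure. Then `⟪φ v, v⟫ = 0` for every `v`, so vectors `e₁, …, e_N` can be chosen
greedily such that `e₁, …, e_N, φ e₁, …, φ e_N` is an orthonormal basis. The unitary `u` whose
columns are `e_j` and `-φ e_j` satisfies `x ū = u J`, and `ū uᵀ = 1` turns this into `x = u J uᵀ`.
-/

open Matrix
open scoped InnerProductSpace

section Orthonormal

variable {𝕜 E : Type*} [RCLike 𝕜] [NormedAddCommGroup E] [InnerProductSpace 𝕜 E]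

theorem exists_norm_eq_one_forall_inner_eq_zero_s10 [FiniteDimensional 𝕜 E] {ι : Type*} [Fintype ι]
    (g : ι → E) (hcard : Fintype.card ι < Module.finrank 𝕜 E) :
    ∃ w : E, ‖w‖ = 1 ∧ ∀ i, ⟪g i, w⟫_𝕜 = 0 := by
  set S := Submodule.span 𝕜 (Set.range g)
  have hS : Module.finrank 𝕜 S ≤ Fintype.card ι := finrank_range_le_card g
  have hperp : Sᗮ ≠ ⊥ := by
    rw [← Submodule.one_le_finrank_iff]
    have := S.finrank_add_finrank_orthogonal
    omega
  obtain ⟨w, hwS, hw⟩ := Submodule.exists_mem_ne_zero_of_ne_bot hperp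
  exact ⟨(‖w‖⁻¹ : 𝕜) • w, norm_smul_inv_norm hw, fun i =>
    Submodule.inner_right_of_mem_orthogonal (Submodule.subset_span (Set.mem_range_self i))
      (Sᗮ.smul_mem _ hwS)⟩

theorem Orthonormal.snoc {k : ℕ} {v : Fin k → E} (hv : Orthonormal 𝕜 v) {w : E} (hw : ‖w‖ = 1)
    (hvw : ∀ i, ⟪v i, w⟫_𝕜 = 0) : Orthonormal 𝕜 (Fin.snoc v w : Fin (k + 1) → E) := by
  classical
  rw [orthonormal_iff_ite] at hv ⊢
  simp [Fin.forall_fin_succ', hv, hvw, inner_eq_zero_symm.mp (hvw _), (Fin.castSucc_lt_last _).ne,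
    (Fin.castSucc_lt_last _).ne', inner_self_eq_norm_sq_to_K, hw]

end Orthonormal

section QuaternionicStructure

variable {E : Type*} [NormedAddCommGroup E] [InnerProductSpace ℂ E] {φ : E →ₗ⋆[ℂ] E}

theorem inner_map_left_swap (hφ : ∀ a b, ⟪φ a, φ b⟫_ℂ = ⟪b, a⟫_ℂ) (hφφ : ∀ v, φ (φ v) = -v)
    (a b : E) : ⟪φ a, b⟫_ℂ = -⟪φ b, a⟫_ℂ :=
  calc ⟪φ a, b⟫_ℂ = ⟪φ a, -φ (φ b)⟫_ℂ := by rw [hφφ, neg_neg]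
    _ = -⟪φ b, a⟫_ℂ := by rw [inner_neg_right, hφ]

theorem inner_map_self (hφ : ∀ a b, ⟪φ a, φ b⟫_ℂ = ⟪b, a⟫_ℂ) (hφφ : ∀ v, φ (φ v) = -v) (v : E) :
    ⟪φ v, v⟫_ℂ = 0 := by
  have := inner_map_left_swap hφ hφφ v v
  linear_combination this / 2

theorem exists_orthonormal_forall_inner_map_eq_zero [FiniteDimensional ℂ E]
    (hφ : ∀ a b, ⟪φ a, φ b⟫_ℂ = ⟪b, a⟫_ℂ) (hφφ : ∀ v, φ (φ v) = -v) :
    ∀ k, 2 * k ≤ Module.finrank ℂ E →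
      ∃ e : Fin k → E, Orthonormal ℂ e ∧ ∀ i j, ⟪φ (e i), e j⟫_ℂ = 0
  | 0, _ => ⟨Fin.elim0, .of_isEmpty _, fun i => i.elim0⟩
  | k + 1, hk => by
    obtain ⟨e, he, heφ⟩ := exists_orthonormal_forall_inner_map_eq_zero hφ hφφ k (by omega)
    obtain ⟨w, hw, hwe⟩ := exists_norm_eq_one_forall_inner_eq_zero_s10 (𝕜 := ℂ) (Sum.elim e (φ ∘ e))
      (by simp only [Fintype.card_sum, Fintype.card_fin]; omega)
    have hφew : ∀ i, ⟪φ (e i), w⟫_ℂ = 0 := fun i => hwe (.inr i)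
    refine ⟨Fin.snoc e w, he.snoc hw fun i => hwe (.inl i), ?_⟩
    simp only [Fin.forall_fin_succ', Fin.snoc_castSucc, Fin.snoc_last]
    refine ⟨fun i => ⟨heφ i, hφew i⟩, fun j => ?_, inner_map_self hφ hφφ w⟩
    rw [inner_map_left_swap hφ hφφ, hφew, neg_zero]

theorem exists_orthonormal_map_inl_inr [FiniteDimensional ℂ E]
    (hφ : ∀ a b, ⟪φ a, φ b⟫_ℂ = ⟪b, a⟫_ℂ) (hφφ : ∀ v, φ (φ v) = -v) {N : ℕ}
    (hN : Module.finrank ℂ E = N + N) :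
    ∃ c : Fin N ⊕ Fin N → E, Orthonormal ℂ c ∧
      ∀ j, φ (c (.inl j)) = -c (.inr j) ∧ φ (c (.inr j)) = c (.inl j) := by
  classical
  obtain ⟨e, he, heφ⟩ := exists_orthonormal_forall_inner_map_eq_zero hφ hφφ N (by omega)
  refine ⟨Sum.elim e (fun j => -φ (e j)), ?_, fun j => by simp [hφφ]⟩
  rw [orthonormal_iff_ite] at he ⊢
  simp [he, hφ, heφ, inner_eq_zero_symm.mp (heφ _ _), eq_comm]

end QuaternionicStructure

namespace Matrix

def ofEuclideanCols {m n : Type*} (c : m → EuclideanSpace ℂ n) : Matrix n m ℂ :=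
  of fun i j => c j i

@[simp]
theorem ofEuclideanCols_apply {m n : Type*} (c : m → EuclideanSpace ℂ n) (i : n) (j : m) :
    ofEuclideanCols c i j = c j i := rfl

-- The ascription on `fromBlocks` keeps elaboration from picking the `CStarMatrix` product.
theorem ofEuclideanCols_mul_fromBlocks {n : Type*} {N : ℕ}
    (c : Fin N ⊕ Fin N → EuclideanSpace ℂ n) :
    ofEuclideanCols c * (fromBlocks 0 1 (-1) 0 : Matrix (Fin N ⊕ Fin N) (Fin N ⊕ Fin N) ℂ) =
      ofEuclideanCols (Sum.elim (fun k => -c (.inr k)) (fun k => c (.inl k))) := by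
  ext i (j | j) <;> simp [mul_apply, Fintype.sum_sum_type, one_apply]

variable {n : Type*} [Fintype n]

def toEuclideanStarLin (x : Matrix n n ℂ) : EuclideanSpace ℂ n →ₗ⋆[ℂ] EuclideanSpace ℂ n where
  toFun v := WithLp.toLp 2 (x *ᵥ star (WithLp.ofLp v))
  map_add' a b := by simp [star_add, mulVec_add]
  map_smul' c v := by simp [mulVec_smul]

theorem toEuclideanStarLin_apply (x : Matrix n n ℂ) (v : EuclideanSpace ℂ n) :
    x.toEuclideanStarLin v = WithLp.toLp 2 (x *ᵥ star (WithLp.ofLp v)) := rfl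

theorem mul_map_star_ofEuclideanCols (x : Matrix n n ℂ) (c : n → EuclideanSpace ℂ n) :
    x * (ofEuclideanCols c).map star = ofEuclideanCols (x.toEuclideanStarLin ∘ c) := by
  ext i j
  simp [toEuclideanStarLin_apply, mul_apply, mulVec, dotProduct]

variable [DecidableEq n]

theorem inner_toEuclideanStarLin {x : Matrix n n ℂ} (hx : x ∈ unitaryGroup n ℂ)
    (a b : EuclideanSpace ℂ n) :
    ⟪x.toEuclideanStarLin a, x.toEuclideanStarLin b⟫_ℂ = ⟪b, a⟫_ℂ := by
  rw [toEuclideanStarLin_apply, toEuclideanStarLin_apply, EuclideanSpace.inner_toLp_toLp,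
    EuclideanSpace.inner_eq_star_dotProduct, star_mulVec, star_star, dotProduct_comm,
    dotProduct_mulVec, vecMul_vecMul, ← star_eq_conjTranspose, mem_unitaryGroup_iff'.mp hx,
    vecMul_one]

theorem toEuclideanStarLin_toEuclideanStarLin {x : Matrix n n ℂ} (hx : x * x.map star = -1)
    (v : EuclideanSpace ℂ n) : x.toEuclideanStarLin (x.toEuclideanStarLin v) = -v := by
  rw [toEuclideanStarLin_apply, toEuclideanStarLin_apply, star_mulVec, star_star,
    ← mulVec_transpose, conjTranspose_transpose, mulVec_mulVec, hx, neg_mulVec, one_mulVec]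
  rfl

theorem mul_map_star_eq_neg_one {x : Matrix n n ℂ} (hx : x ∈ unitaryGroup n ℂ)
    (hskew : xᵀ = -x) : x * x.map star = -1 := by
  rw [← transpose_conjTranspose, hskew, conjTranspose_neg, mul_neg, ← star_eq_conjTranspose,
    mem_unitaryGroup_iff.mp hx]

theorem map_star_mul_transpose {u : Matrix n n ℂ} (hu : u ∈ unitaryGroup n ℂ) :
    u.map star * uᵀ = 1 := by
  rw [← conjTranspose_transpose, ← transpose_mul, ← star_eq_conjTranspose,
    mem_unitaryGroup_iff.mp hu, transpose_one]

theorem ofEuclideanCols_mem_unitaryGroup {c : n → EuclideanSpace ℂ n} (hc : Orthonormal ℂ c) :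
    ofEuclideanCols c ∈ unitaryGroup n ℂ := by
  have hgram : gram ℂ c = (ofEuclideanCols c)ᴴ * ofEuclideanCols c :=
    gram_eq_conjTranspose_mul (EuclideanSpace.basisFun n ℂ) c
  rwa [mem_unitaryGroup_iff', star_eq_conjTranspose, ← hgram, gram_eq_one_iff_orthonormal]

end Matrix

theorem skew_unitary_eq_u_mul_J_mul_u_transpose_general
    {N : ℕ}
    (J : Matrix (Fin N ⊕ Fin N) (Fin N ⊕ Fin N) ℂ)
    (hJ : J = Matrix.fromBlocks 0 1 (-1) 0)
    (x : Matrix (Fin N ⊕ Fin N) (Fin N ⊕ Fin N) ℂ)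
    (hx : x ∈ Matrix.unitaryGroup (Fin N ⊕ Fin N) ℂ)
    (hskew : xᵀ = -x) :
    ∃ u ∈ Matrix.unitaryGroup (Fin N ⊕ Fin N) ℂ, x = u * J * uᵀ := by
  obtain ⟨c, hc, hφc⟩ := exists_orthonormal_map_inl_inr (inner_toEuclideanStarLin hx)
    (toEuclideanStarLin_toEuclideanStarLin (mul_map_star_eq_neg_one hx hskew))
    (N := N) (by simp [finrank_euclideanSpace])
  have hu := ofEuclideanCols_mem_unitaryGroup hc
  have hxu : x * (ofEuclideanCols c).map star = ofEuclideanCols c * J := by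
    rw [mul_map_star_ofEuclideanCols, hJ, ofEuclideanCols_mul_fromBlocks]
    congr 1
    ext1 (j | j)
    exacts [(hφc j).1, (hφc j).2]
  refine ⟨ofEuclideanCols c, hu, ?_⟩
  calc x = x * ((ofEuclideanCols c).map star * (ofEuclideanCols c)ᵀ) := by
        rw [map_star_mul_transpose hu, Matrix.mul_one]
    _ = ofEuclideanCols c * J * (ofEuclideanCols c)ᵀ := by rw [← Matrix.mul_assoc, hxu]

/-- Every skew-symmetric unitary `2N × 2N` matrix `x`
factors as `x = u · J · uᵀ` with `u` unitary, where
`J = [[0, 1], [-1, 0]]` is the standard symplectic form matrix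
(surjectivity of the Cartan embedding of `U_{2N}/USp_{2N}`). -/
theorem skew_unitary_eq_u_mul_J_mul_u_transpose
    {N : ℕ} (hN : 0 < N)
    (J : Matrix (Fin N ⊕ Fin N) (Fin N ⊕ Fin N) ℂ)
    (hJ : J = Matrix.fromBlocks 0 1 (-1) 0)
    (x : Matrix (Fin N ⊕ Fin N) (Fin N ⊕ Fin N) ℂ)
    (hx : x ∈ Matrix.unitaryGroup (Fin N ⊕ Fin N) ℂ)
    (hskew : xᵀ = -x) :
    ∃ u ∈ Matrix.unitaryGroup (Fin N ⊕ Fin N) ℂ, x = u * J * uᵀ :=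
  skew_unitary_eq_u_mul_J_mul_u_transpose_general J hJ x hx hskew
end
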